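/- Let (M,d) be a nonempty compact metric space and let y : [0,∞) → M be 1-Lipschitz (d(y(s),y(t)) ≤ |s−t| for all s,t ≥ 0). Then for every ε > 0 there exist a point p ∈ M and a strictly increasing sequence (T_n)_{n≥1} of positive real numbers tending to +∞ such that liminf_{n→∞} (1/T_n)·λ({t ∈ [0,T_n] : d(y(t), p) < ε}) > 0, where λ denotes the Lebesgue measure on [0,∞). -/

import Mathlib

open MeasureTheory Filter ENNReal

/-- For a `1`-Lipschitz curve `y : [0,∞) → M` in a nonempty compact metric space and any
`ε > 0`, there exist a point `p` and an increasing sequence of times `T_n → +∞` along which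
the fraction of time spent by `y` in the ball `B(p, ε)` has positive liminf. -/
theorem statement_6 {M : Type*} [MetricSpace M] [CompactSpace M] [Nonempty M]
    (y : ℝ → M) (hy : ∀ s t : ℝ, 0 ≤ s → 0 ≤ t → dist (y s) (y t) ≤ |s - t|)
    (ε : ℝ) (hε : 0 < ε) :
    ∃ p : M, ∃ Tn : ℕ → ℝ, StrictMono Tn ∧ (∀ n, 0 < Tn n) ∧
      Tendsto Tn Filter.atTop Filter.atTop ∧
      0 < Filter.liminf
        (fun n : ℕ =>
          (volume {t ∈ Set.Icc (0 : ℝ) (Tn n) | dist (y t) p < ε}).toReal / Tn n)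
        Filter.atTop := by
  set δ : ℝ := ε / 2 with hδdef
  have hδ : 0 < δ := half_pos hε
  obtain ⟨t0, -, ht0fin, ht0cov⟩ :=
    finite_cover_balls_of_compact (isCompact_univ : IsCompact (Set.univ : Set M)) hδ
  set F : Finset M := ht0fin.toFinset with hFdef
  set N : ℕ := F.card with hNdef
  set cnt : M → ℕ → ℕ := fun p n =>
    ((Finset.range n).filter (fun k : ℕ => dist (y ((k : ℝ) * δ)) p < δ)).card with hcntdef
  -- every sample point lies in some ball of the cover
  have hcov : ∀ k : ℕ, ∃ p ∈ F, dist (y (k * δ)) p < δ := by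
    intro k
    have := ht0cov (Set.mem_univ (y (k * δ)))
    simp only [Set.mem_iUnion, Metric.mem_ball] at this
    obtain ⟨p, hp, hd⟩ := this
    exact ⟨p, ht0fin.mem_toFinset.2 hp, hd⟩
  have hF0 : F.Nonempty := by
    obtain ⟨p, hp, -⟩ := hcov 0
    exact ⟨p, hp⟩
  -- counting lower bound
  have hsum : ∀ n : ℕ, n ≤ ∑ p ∈ F, cnt p n := by
    intro n
    have hsub : Finset.range n ⊆
        F.biUnion (fun p => (Finset.range n).filter (fun k : ℕ => dist (y ((k : ℝ) * δ)) p < δ)) := by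
      intro k hk
      obtain ⟨p, hp, hd⟩ := hcov k
      exact Finset.mem_biUnion.2 ⟨p, hp, Finset.mem_filter.2 ⟨hk, hd⟩⟩
    calc n = (Finset.range n).card := (Finset.card_range n).symm
      _ ≤ _ := Finset.card_le_card hsub
      _ ≤ ∑ p ∈ F, cnt p n := by simp only [hcntdef]; exact Finset.card_biUnion_le
  -- pigeonhole for each n
  have hpig : ∀ n : ℕ, 1 ≤ n → ∃ p ∈ F, n ≤ N * cnt p n := by
    intro n hn
    by_contra h
    push_neg at h
    have hlt : ∑ p ∈ F, (N * cnt p n) < ∑ p ∈ F, n :=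
      Finset.sum_lt_sum_of_nonempty hF0 (fun p hp => h p hp)
    rw [← Finset.mul_sum, Finset.sum_const, smul_eq_mul, ← hNdef] at hlt
    have : N * n ≤ N * ∑ p ∈ F, cnt p n := Nat.mul_le_mul_left N (hsum n)
    omega
  -- some fixed p works frequently
  have hfreq : ∃ p ∈ F, ∃ᶠ n in atTop, n ≤ N * cnt p n := by
    by_contra h
    push_neg at h
    have hall : ∀ᶠ n in atTop, ∀ p ∈ F, ¬ (n ≤ N * cnt p n) :=
      (eventually_all_finset F).2 (fun p hp => ((h p hp).mono (fun n hn => not_le.2 hn)))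
    have h1 : ∀ᶠ n : ℕ in atTop, 1 ≤ n := eventually_ge_atTop 1
    obtain ⟨n, hn1, hn2⟩ := (h1.and hall).exists
    obtain ⟨p, hp, hle⟩ := hpig n hn1
    exact hn2 p hp hle
  obtain ⟨p, hpF, hfreq⟩ := hfreq
  have hN : 0 < N := Finset.card_pos.2 ⟨p, hpF⟩
  obtain ⟨φ, hφmono, hφ⟩ := extraction_of_frequently_atTop hfreq
  refine ⟨p, fun m => (φ (m + 1) : ℝ) * δ, ?_, ?_, ?_, ?_⟩
  · intro a b hab
    exact mul_lt_mul_of_pos_right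
      (Nat.cast_lt.2 (hφmono (by omega))) hδ
  · intro m
    have : 1 ≤ φ (m + 1) := le_trans (by omega) (hφmono.le_apply)
    positivity
  · apply tendsto_atTop_mono (f := fun m : ℕ => (m : ℝ) * δ)
    · intro m
      have h1 : (m : ℝ) ≤ (φ (m + 1) : ℝ) := by
        exact_mod_cast le_trans (by omega) (hφmono.le_apply)
      exact mul_le_mul_of_nonneg_right h1 hδ.le
    · exact Tendsto.atTop_mul_const hδ tendsto_natCast_atTop_atTop
  · -- key measure estimate
    have hkey : ∀ n : ℕ, (cnt p n : ℝ) * δ ≤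
        (volume {x ∈ Set.Icc (0 : ℝ) ((n : ℝ) * δ) | dist (y x) p < ε}).toReal := by
      intro n
      set S : Finset ℕ := (Finset.range n).filter (fun k : ℕ => dist (y ((k : ℝ) * δ)) p < δ) with hSdef
      set U : Set ℝ := ⋃ k ∈ S, Set.Ico ((k : ℝ) * δ) (((k : ℕ) + 1 : ℝ) * δ) with hUdef
      have hUsub : U ⊆ {x ∈ Set.Icc (0 : ℝ) ((n : ℝ) * δ) | dist (y x) p < ε} := by
        intro x hx
        simp only [hUdef, Set.mem_iUnion] at hx
        obtain ⟨k, hkS, hx1, hx2⟩ := hx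
        have hkn : k < n := Finset.mem_range.1 (Finset.mem_filter.1 hkS).1
        have hkd : dist (y (k * δ)) p < δ := (Finset.mem_filter.1 hkS).2
        have hx0 : (0 : ℝ) ≤ x := le_trans (by positivity) hx1
        have hk0 : (0 : ℝ) ≤ (k : ℝ) * δ := by positivity
        refine ⟨⟨hx0, ?_⟩, ?_⟩
        · have : ((k : ℝ) + 1) * δ ≤ (n : ℝ) * δ := by
            have : (k : ℝ) + 1 ≤ (n : ℝ) := by exact_mod_cast hkn
            nlinarith
          linarith
        · have hd1 : dist (y x) (y ((k : ℝ) * δ)) ≤ |x - (k : ℝ) * δ| := hy x _ hx0 hk0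
          have habs : |x - (k : ℝ) * δ| < δ := by
            rw [abs_lt]
            constructor <;> nlinarith
          calc dist (y x) p ≤ dist (y x) (y ((k : ℝ) * δ)) + dist (y ((k : ℝ) * δ)) p :=
                dist_triangle _ _ _
            _ < δ + δ := by exact add_lt_add (lt_of_le_of_lt hd1 habs) hkd
            _ = ε := by rw [hδdef]; ring
      have hdisj : (S : Set ℕ).PairwiseDisjoint
          (fun k : ℕ => Set.Ico ((k : ℝ) * δ) (((k : ℕ) + 1 : ℝ) * δ)) := by
        intro a _ b _ hab
        refine Set.Ico_disjoint_Ico.2 ?_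
        rcases hab.lt_or_gt with h | h
        · have : (a : ℝ) + 1 ≤ (b : ℝ) := by exact_mod_cast h
          calc min (((a : ℕ) + 1 : ℝ) * δ) (((b : ℕ) + 1 : ℝ) * δ) ≤ ((a : ℝ) + 1) * δ :=
              min_le_left _ _
            _ ≤ (b : ℝ) * δ := mul_le_mul_of_nonneg_right this hδ.le
            _ ≤ max ((a : ℝ) * δ) ((b : ℝ) * δ) := le_max_right _ _
        · have : (b : ℝ) + 1 ≤ (a : ℝ) := by exact_mod_cast h
          calc min (((a : ℕ) + 1 : ℝ) * δ) (((b : ℕ) + 1 : ℝ) * δ) ≤ ((b : ℝ) + 1) * δ :=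
              min_le_right _ _
            _ ≤ (a : ℝ) * δ := mul_le_mul_of_nonneg_right this hδ.le
            _ ≤ max ((a : ℝ) * δ) ((b : ℝ) * δ) := le_max_left _ _
      have hUvol : volume U = (S.card : ℝ≥0∞) * ENNReal.ofReal δ := by
        rw [hUdef, measure_biUnion_finset hdisj (fun k _ => measurableSet_Ico)]
        have : ∀ k ∈ S, volume (Set.Ico ((k : ℝ) * δ) (((k : ℕ) + 1 : ℝ) * δ))
            = ENNReal.ofReal δ := by
          intro k _
          rw [Real.volume_Ico]
          congr 1
          ring
        rw [Finset.sum_congr rfl this, Finset.sum_const, nsmul_eq_mul]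
      have hfin : volume {x ∈ Set.Icc (0 : ℝ) ((n : ℝ) * δ) | dist (y x) p < ε} ≠ ⊤ := by
        have h1 : volume {x ∈ Set.Icc (0 : ℝ) ((n : ℝ) * δ) | dist (y x) p < ε}
            ≤ volume (Set.Icc (0 : ℝ) ((n : ℝ) * δ)) := measure_mono (Set.sep_subset _ _)
        rw [Real.volume_Icc] at h1
        exact ne_top_of_le_ne_top ENNReal.ofReal_ne_top h1
      have h1 : volume U ≤ volume {x ∈ Set.Icc (0 : ℝ) ((n : ℝ) * δ) | dist (y x) p < ε} :=
        measure_mono hUsub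
      have h2 := ENNReal.toReal_mono hfin h1
      rw [hUvol, ENNReal.toReal_mul, ENNReal.toReal_natCast,
        ENNReal.toReal_ofReal hδ.le] at h2
      exact h2
    -- each term of the sequence is at least 1/N
    have hterm : ∀ m : ℕ, (1 : ℝ) / N ≤
        (volume {x ∈ Set.Icc (0 : ℝ) ((φ (m + 1) : ℝ) * δ) | dist (y x) p < ε}).toReal /
          ((φ (m + 1) : ℝ) * δ) := by
      intro m
      set n : ℕ := φ (m + 1) with hn
      have hn1 : 1 ≤ n := le_trans (by omega) (hφmono.le_apply)
      have hnpos : (0 : ℝ) < (n : ℝ) := by exact_mod_cast hn1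
      have hNC : n ≤ N * cnt p n := hφ (m + 1)
      have hNC' : (n : ℝ) ≤ (N : ℝ) * (cnt p n : ℝ) := by exact_mod_cast hNC
      have hcd : (1 : ℝ) / N ≤ (cnt p n : ℝ) / n := by
        rw [div_le_div_iff₀ (by exact_mod_cast hN) hnpos]
        linarith
      calc (1 : ℝ) / N ≤ (cnt p n : ℝ) / n := hcd
        _ = ((cnt p n : ℝ) * δ) / ((n : ℝ) * δ) := by
            rw [mul_div_mul_right _ _ (ne_of_gt hδ)]
        _ ≤ _ := by
            have hpos : (0:ℝ) < (n : ℝ) * δ := by positivity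
            exact (div_le_div_iff_of_pos_right hpos).2 (hkey n)
    have hlim : (1 : ℝ) / N ≤ Filter.liminf
        (fun m : ℕ =>
          (volume {x ∈ Set.Icc (0 : ℝ) ((φ (m + 1) : ℝ) * δ) | dist (y x) p < ε}).toReal /
            ((φ (m + 1) : ℝ) * δ)) atTop := by
      have hub : ∀ m : ℕ,
          (volume {x ∈ Set.Icc (0 : ℝ) ((φ (m + 1) : ℝ) * δ) | dist (y x) p < ε}).toReal /
            ((φ (m + 1) : ℝ) * δ) ≤ 1 := by
        intro m
        have hn1 : 1 ≤ φ (m + 1) := le_trans (by omega) (hφmono.le_apply)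
        have hTpos : (0:ℝ) < (φ (m + 1) : ℝ) * δ := by
          have : (0:ℝ) < (φ (m + 1) : ℝ) := by exact_mod_cast hn1
          positivity
        rw [div_le_one hTpos]
        have h1 : volume {x ∈ Set.Icc (0 : ℝ) ((φ (m + 1) : ℝ) * δ) | dist (y x) p < ε}
            ≤ volume (Set.Icc (0 : ℝ) ((φ (m + 1) : ℝ) * δ)) := measure_mono (Set.sep_subset _ _)
        have h2 := ENNReal.toReal_mono (by rw [Real.volume_Icc]; exact ENNReal.ofReal_ne_top) h1
        rw [Real.volume_Icc, ENNReal.toReal_ofReal (by linarith)] at h2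
        linarith
      apply le_liminf_of_le
      · exact isCoboundedUnder_ge_of_le atTop hub
      · exact Eventually.of_forall hterm
    have hN' : (0 : ℝ) < (N : ℝ) := by exact_mod_cast hN
    exact lt_of_lt_of_le (one_div_pos.2 hN') hlim
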